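/- arXiv:2001.00760 — 3 statements merged into one kernel-verified Lean document; each statement's English description precedes it below -/
import Mathlib

section
/- For any Boolean function S : {0,1}^n → {0,1} with nonempty support, there exist functions h_i : {0,1}^i → {0,1} for i = 1,…,n such that the image of the map H(α_1,…,α_n) = (h_1(α_1), h_2(α_1,α_2), …, h_n(α_1,…,α_n)) is exactly the support of S, i.e. {x ∈ {0,1}^n : S(x) = 1}. -/
/-- Extendability of the prefix of `v` up to and including coordinate `k`. -/
def stmt0cond (n : ℕ) (S : (Fin n → Bool) → Bool) (k : ℕ) (v : Fin n → Bool) : Prop :=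
  ∃ y, S y = true ∧ ∀ j : Fin n, j.val ≤ k → y j = v j

open Classical in
/-- One correction step: fix coordinate `k` so the prefix up to `k` stays extendable. -/
noncomputable def stmt0step (n : ℕ) (S : (Fin n → Bool) → Bool) (k : ℕ)
    (v : Fin n → Bool) : Fin n → Bool :=
  if h : k < n then
    Function.update v ⟨k, h⟩
      (if stmt0cond n S k v then v ⟨k, h⟩ else !(v ⟨k, h⟩))
  else v

noncomputable def stmt0out (n : ℕ) (S : (Fin n → Bool) → Bool) :
    ℕ → (Fin n → Bool) → (Fin n → Bool)
  | 0 => id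
  | (k+1) => fun x => stmt0step n S k (stmt0out n S k x)

lemma stmt0step_ne (n : ℕ) (S : (Fin n → Bool) → Bool) (k : ℕ) (v : Fin n → Bool)
    (j : Fin n) (hj : j.val ≠ k) : stmt0step n S k v j = v j := by
  unfold stmt0step
  split
  · apply Function.update_of_ne
    intro h; exact hj (by simp [h])
  · rfl

/-- Coordinates ≥ k are untouched by `out k`. -/
lemma stmt0out_high (n : ℕ) (S : (Fin n → Bool) → Bool) :
    ∀ k (x : Fin n → Bool) (j : Fin n), k ≤ j.val → stmt0out n S k x j = x j := by
  intro k
  induction k with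
  | zero => intro x j _; rfl
  | succ k ih =>
    intro x j hj
    show stmt0step n S k (stmt0out n S k x) j = x j
    rw [stmt0step_ne n S k _ j (by omega), ih x j (by omega)]

/-- Coordinates < k are stable after step k. -/
lemma stmt0out_stable (n : ℕ) (S : (Fin n → Bool) → Bool) :
    ∀ m k (x : Fin n → Bool) (j : Fin n), j.val < k → k ≤ m →
      stmt0out n S m x j = stmt0out n S k x j := by
  intro m
  induction m with
  | zero => intro k x j h1 h2; omega
  | succ m ih =>
    intro k x j h1 h2
    rcases Nat.eq_or_lt_of_le h2 with h | h
    · rw [h]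
    · have hk : k ≤ m := by omega
      show stmt0step n S m (stmt0out n S m x) j = _
      rw [stmt0step_ne n S m _ j (by omega), ih k x j h1 hk]

/-- Triangularity: `out k x j` for `j < k` depends only on `x` below `k`. -/
lemma stmt0out_agree (n : ℕ) (S : (Fin n → Bool) → Bool) (i : ℕ)
    (x y : Fin n → Bool) (hxy : ∀ j : Fin n, j.val ≤ i → x j = y j) :
    ∀ k, k ≤ i + 1 → ∀ j : Fin n, j.val ≤ i → stmt0out n S k x j = stmt0out n S k y j := by
  intro k
  induction k with
  | zero => intro _ j hj; exact hxy j hj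
  | succ k ih =>
    intro hk j hj
    have hk' : k ≤ i + 1 := by omega
    have hki : k ≤ i := by omega
    have hcond : stmt0cond n S k (stmt0out n S k x) ↔ stmt0cond n S k (stmt0out n S k y) := by
      constructor <;> rintro ⟨z, hz, hzv⟩ <;> refine ⟨z, hz, fun j' hj' => ?_⟩
      · rw [← ih hk' j' (by omega)]; exact hzv j' hj'
      · rw [ih hk' j' (by omega)]; exact hzv j' hj'
    show stmt0step n S k (stmt0out n S k x) j = stmt0step n S k (stmt0out n S k y) j
    by_cases hjk : j.val = k
    · unfold stmt0step
      have hkn : k < n := by omega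
      rw [dif_pos hkn, dif_pos hkn]
      have hj' : j = ⟨k, hkn⟩ := Fin.ext hjk
      subst hj'
      rw [Function.update_self, Function.update_self]
      have hv : stmt0out n S k x ⟨k, hkn⟩ = stmt0out n S k y ⟨k, hkn⟩ :=
        ih hk' ⟨k, hkn⟩ (by simpa using hki)
      by_cases hc : stmt0cond n S k (stmt0out n S k x)
      · rw [if_pos hc, if_pos (hcond.mp hc), hv]
      · rw [if_neg hc, if_neg (fun h => hc (hcond.mpr h)), hv]
    · rw [stmt0step_ne n S k _ j hjk, stmt0step_ne n S k _ j hjk]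
      exact ih hk' j hj

/-- Invariant: the prefix of `out k x` below `k` is extendable to a support point. -/
lemma stmt0inv (n : ℕ) (S : (Fin n → Bool) → Bool) (hS : ∃ x, S x = true)
    (x : Fin n → Bool) :
    ∀ k, k ≤ n → ∃ y, S y = true ∧ ∀ j : Fin n, j.val < k → y j = stmt0out n S k x j := by
  intro k
  induction k with
  | zero => obtain ⟨y, hy⟩ := hS; exact fun _ => ⟨y, hy, fun j hj => by omega⟩
  | succ k ih =>
    intro hk
    have hkn : k < n := by omega
    obtain ⟨y, hy, hagree⟩ := ih (by omega)
    set v := stmt0out n S k x with hv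
    show ∃ y, S y = true ∧ ∀ j : Fin n, j.val < k + 1 → y j = stmt0step n S k v j
    by_cases hc : stmt0cond n S k v
    · obtain ⟨z, hz, hzv⟩ := hc
      refine ⟨z, hz, fun j hj => ?_⟩
      unfold stmt0step
      rw [dif_pos hkn, if_pos ⟨z, hz, hzv⟩, Function.update_eq_self]
      exact hzv j (by omega)
    · have hyk : y ⟨k, hkn⟩ = !(v ⟨k, hkn⟩) := by
        by_contra h
        have : y ⟨k, hkn⟩ = v ⟨k, hkn⟩ := by
          cases hb : y ⟨k, hkn⟩ <;> cases hb' : v ⟨k, hkn⟩ <;> simp_all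
        exact hc ⟨y, hy, fun j hj => by
          rcases Nat.lt_or_ge j.val k with h' | h'
          · exact hagree j h'
          · have hj2 : j = ⟨k, hkn⟩ := Fin.ext (show j.val = k by omega)
            rw [hj2]; exact this⟩
      refine ⟨y, hy, fun j hj => ?_⟩
      by_cases hjk : j.val = k
      · have hj' : j = ⟨k, hkn⟩ := Fin.ext hjk
        subst hj'
        unfold stmt0step
        rw [dif_pos hkn, if_neg hc, Function.update_self]
        exact hyk
      · rw [stmt0step_ne n S k v j hjk]
        exact hagree j (by omega)

/-- Support points are fixed. -/
lemma stmt0fix (n : ℕ) (S : (Fin n → Bool) → Bool) (z : Fin n → Bool) (hz : S z = true) :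
    ∀ k, stmt0out n S k z = z := by
  intro k
  induction k with
  | zero => rfl
  | succ k ih =>
    show stmt0step n S k (stmt0out n S k z) = z
    rw [ih]
    unfold stmt0step
    split
    · rw [if_pos ⟨z, hz, fun j _ => rfl⟩, Function.update_eq_self]
    · rfl

/-- For any Boolean function `S` on `{0,1}^n` with nonempty support,
there is a triangular family of functions `h i` (each depending only on the first
`i` coordinates) whose induced map `H x = fun i => h i x` has image exactly the
support of `S`. -/
theorem stmt0 (n : ℕ) (S : (Fin n → Bool) → Bool) (hS : ∃ x, S x = true) :
    ∃ h : Fin n → (Fin n → Bool) → Bool,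
      (∀ (i : Fin n) (x y : Fin n → Bool), (∀ j : Fin n, j ≤ i → x j = y j) → h i x = h i y) ∧
      Set.range (fun x (i : Fin n) => h i x) = {x | S x = true} := by
  refine ⟨fun i x => stmt0out n S n x i, ?_, ?_⟩
  · intro i x y hxy
    have h1 : stmt0out n S n x i = stmt0out n S (i.val + 1) x i :=
      stmt0out_stable n S n (i.val + 1) x i (by omega) (by omega)
    have h2 : stmt0out n S n y i = stmt0out n S (i.val + 1) y i :=
      stmt0out_stable n S n (i.val + 1) y i (by omega) (by omega)
    show stmt0out n S n x i = stmt0out n S n y i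
    rw [h1, h2]
    exact stmt0out_agree n S i.val x y
      (fun j hj => hxy j (Fin.le_def.mpr hj)) (i.val + 1) le_rfl i le_rfl
  · ext z
    simp only [Set.mem_range, Set.mem_setOf_eq]
    constructor
    · rintro ⟨x, rfl⟩
      obtain ⟨y, hy, hagree⟩ := stmt0inv n S hS x n le_rfl
      have : y = fun i => stmt0out n S n x i := funext fun j => hagree j j.isLt
      rw [← this]; exact hy
    · intro hz
      exact ⟨z, by have := stmt0fix n S z hz n; funext i; rw [this]⟩
end

section
/- Let S ⊆ (ZMod 2)^n be nonempty with |S| ≤ 2^k. Then there exists a subset J ⊆ {1,…,n} with |J| ≤ k such that the multilinear polynomial representing 1_S has a nonzero coefficient on the monomial ∏_{i ∉ J} x_i. Conversely, if S = ∅ then all coefficients of monomials of degree ≥ n − k vanish (indeed all coefficients vanish). -/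
namespace Stmt10Aux

variable {n : ℕ}

/-- indicator vector of a set of coordinates -/
def e (T : Finset (Fin n)) : Fin n → ZMod 2 := fun i => if i ∈ T then 1 else 0

lemma prod_e (A T : Finset (Fin n)) :
    (∏ i ∈ A, e T i) = if A ⊆ T then 1 else 0 := by
  split_ifs with h
  · apply Finset.prod_eq_one
    intro i hi
    simp [e, h hi]
  · obtain ⟨i, hiA, hiT⟩ := Finset.not_subset.mp h
    apply Finset.prod_eq_zero hiA
    simp [e, hiT]

lemma e_supp (s : Fin n → ZMod 2) : e (Finset.univ.filter (fun i => s i = 1)) = s := by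
  funext i
  simp only [e, Finset.mem_filter, Finset.mem_univ, true_and]
  have h01 : ∀ x : ZMod 2, x = 0 ∨ x = 1 := by decide
  rcases h01 (s i) with h | h <;> simp [h]

lemma e_inj : Function.Injective (e (n := n)) := by
  intro T T' h
  ext i
  have := congrFun h i
  simp only [e] at this
  by_cases h1 : i ∈ T <;> by_cases h2 : i ∈ T' <;>
    simp only [h1, h2, if_true, if_false] at this <;> simp [h1, h2]
  · exact one_ne_zero this
  · exact one_ne_zero this.symm

/-- Möbius inversion over `ZMod 2` on the subset lattice. -/
lemma inversion (g : Finset (Fin n) → ZMod 2) (U : Finset (Fin n)) :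
    (∑ T ∈ U.powerset, ∑ T' ∈ T.powerset, g T') = g U := by
  have h1 : ∀ T ∈ U.powerset, (∑ T' ∈ T.powerset, g T')
      = ∑ T' ∈ U.powerset, if T' ⊆ T then g T' else 0 := by
    intro T hT
    rw [Finset.mem_powerset] at hT
    have hps : U.powerset.filter (fun T' => T' ⊆ T) = T.powerset := by
      ext T'
      simp only [Finset.mem_filter, Finset.mem_powerset]
      exact ⟨fun h => h.2, fun h => ⟨h.trans hT, h⟩⟩
    rw [Finset.sum_ite, Finset.sum_const_zero, add_zero, hps]
  rw [Finset.sum_congr rfl h1, Finset.sum_comm]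
  have h2 : ∀ T' ∈ U.powerset, (∑ T ∈ U.powerset, if T' ⊆ T then g T' else 0)
      = if T' = U then g U else 0 := by
    intro T' hT'
    rw [Finset.mem_powerset] at hT'
    rw [Finset.sum_ite, Finset.sum_const_zero, add_zero, Finset.sum_const, nsmul_eq_mul]
    have : U.powerset.filter (fun T => T' ⊆ T) = Finset.Icc T' U := by
      rw [Finset.Icc_eq_filter_powerset]
    rw [this, Finset.card_Icc_finset hT']
    by_cases h : T' = U
    · subst h; simp
    · have hlt : T'.card < U.card := Finset.card_lt_card (hT'.ssubset_of_ne h)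
      have : (2 : ZMod 2) = 0 := by decide
      rw [if_neg h]
      have hpos : 0 < U.card - T'.card := by omega
      obtain ⟨m, hm⟩ := Nat.exists_eq_succ_of_ne_zero hpos.ne'
      rw [hm, pow_succ]
      push_cast
      rw [this]
      ring
  rw [Finset.sum_congr rfl h2, Finset.sum_ite_eq' U.powerset U (fun _ => g U),
    if_pos (Finset.mem_powerset.mpr subset_rfl)]

/-- the coefficient formula -/
lemma coeff_eq (S : Finset (Fin n → ZMod 2)) (c : Finset (Fin n) → ZMod 2)
    (hc : ∀ x : Fin n → ZMod 2,
      (if x ∈ S then (1 : ZMod 2) else 0) = ∑ T : Finset (Fin n), c T * ∏ i ∈ T, x i)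
    (U : Finset (Fin n)) :
    c U = ∑ T ∈ U.powerset, (if e T ∈ S then (1 : ZMod 2) else 0) := by
  have key : ∀ V : Finset (Fin n),
      (if e V ∈ S then (1 : ZMod 2) else 0) = ∑ T ∈ V.powerset, c T := by
    intro V
    rw [hc (e V)]
    have : ∀ T : Finset (Fin n), c T * ∏ i ∈ T, e V i =
        if T ∈ V.powerset then c T else 0 := by
      intro T
      rw [prod_e]
      simp only [Finset.mem_powerset]
      split_ifs with h <;> simp
    rw [Finset.sum_congr rfl (fun T _ => this T), Finset.sum_ite_mem,
      Finset.univ_inter]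
  calc c U = ∑ T ∈ U.powerset, ∑ T' ∈ T.powerset, c T' := (inversion c U).symm
    _ = ∑ T ∈ U.powerset, (if e T ∈ S then (1 : ZMod 2) else 0) := by
        exact Finset.sum_congr rfl (fun T _ => (key T).symm)

/-- the main combinatorial lemma -/
lemma comb : ∀ k : ℕ, ∀ S : Finset (Fin n → ZMod 2), S.Nonempty → S.card ≤ 2 ^ k →
    ∃ J : Finset (Fin n), J.card ≤ k ∧
      (S.filter (fun s => ∀ i ∈ J, s i = 0)).card % 2 = 1 := by
  intro k
  induction k with
  | zero =>
    intro S hne hcard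
    refine ⟨∅, le_refl 0, ?_⟩
    have : S.filter (fun s => ∀ i ∈ (∅ : Finset (Fin n)), s i = 0) = S :=
      Finset.filter_true_of_mem (fun s _ => by simp)
    rw [this]
    have : S.card = 1 := le_antisymm (by simpa using hcard) hne.card_pos
    omega
  | succ k ih =>
    intro S hne hcard
    by_cases hodd : S.card % 2 = 1
    · refine ⟨∅, Nat.zero_le _, ?_⟩
      have : S.filter (fun s => ∀ i ∈ (∅ : Finset (Fin n)), s i = 0) = S :=
        Finset.filter_true_of_mem (fun s _ => by simp)
      rw [this]; exact hodd
    · -- S.card even, ≥ 2; find a coordinate splitting S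
      have h2 : 1 < S.card := by
        have := hne.card_pos; omega
      obtain ⟨s, hs, t, ht, hst⟩ := Finset.one_lt_card.mp h2
      obtain ⟨i, hi⟩ := Function.ne_iff.mp hst
      set A := S.filter (fun s => s i = 0) with hA
      set B := S.filter (fun s => ¬ s i = 0) with hB
      have hsum : A.card + B.card = S.card := Finset.card_filter_add_card_filter_not _
      have hAne : A.Nonempty := by
        have hcases : s i = 0 ∨ t i = 0 := by
          have h01 : ∀ x : ZMod 2, x = 0 ∨ x = 1 := by decide
          rcases h01 (s i) with h | h
          · exact Or.inl h
          · rcases h01 (t i) with h' | h'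
            · exact Or.inr h'
            · exact absurd (h.trans h'.symm) hi
        rcases hcases with h | h
        · exact ⟨s, Finset.mem_filter.mpr ⟨hs, h⟩⟩
        · exact ⟨t, Finset.mem_filter.mpr ⟨ht, h⟩⟩
      have hBne : B.Nonempty := by
        have hcases : ¬ s i = 0 ∨ ¬ t i = 0 := by
          by_contra h
          push_neg at h
          exact hi (h.1.trans h.2.symm)
        rcases hcases with h | h
        · exact ⟨s, Finset.mem_filter.mpr ⟨hs, h⟩⟩
        · exact ⟨t, Finset.mem_filter.mpr ⟨ht, h⟩⟩
      -- key identity: filtering by `insert i J'` = restricting to A then filtering by J'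
      have hfilt : ∀ J' : Finset (Fin n),
          S.filter (fun s => ∀ j ∈ insert i J', s j = 0)
            = A.filter (fun s => ∀ j ∈ J', s j = 0) := by
        intro J'
        rw [hA, Finset.filter_filter]
        apply Finset.filter_congr
        intro x _
        simp [Finset.forall_mem_insert]
      by_cases hAcard : A.card ≤ 2 ^ k
      · obtain ⟨J', hJ'le, hJ'odd⟩ := ih A hAne hAcard
        refine ⟨insert i J', ?_, ?_⟩
        · calc (insert i J').card ≤ J'.card + 1 := Finset.card_insert_le _ _
            _ ≤ k + 1 := Nat.add_le_add_right hJ'le 1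
        · rw [hfilt J']; exact hJ'odd
      · have hBcard : B.card ≤ 2 ^ k := by
          have : 2 ^ (k + 1) = 2 ^ k + 2 ^ k := by ring
          omega
        obtain ⟨J', hJ'le, hJ'odd⟩ := ih B hBne hBcard
        -- split S.filter (P J') by the value at i
        have hsplit :
            (S.filter (fun s => ∀ j ∈ J', s j = 0)).card
              = (S.filter (fun s => ∀ j ∈ insert i J', s j = 0)).card
                + (B.filter (fun s => ∀ j ∈ J', s j = 0)).card := by
          rw [hfilt J', hA, hB, Finset.filter_filter, Finset.filter_filter]
          have e1 : S.filter (fun s => s i = 0 ∧ ∀ j ∈ J', s j = 0)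
              = (S.filter (fun s => ∀ j ∈ J', s j = 0)).filter (fun s => s i = 0) := by
            rw [Finset.filter_filter]
            apply Finset.filter_congr
            intro x _; tauto
          have e2 : S.filter (fun s => ¬ s i = 0 ∧ ∀ j ∈ J', s j = 0)
              = (S.filter (fun s => ∀ j ∈ J', s j = 0)).filter (fun s => ¬ s i = 0) := by
            rw [Finset.filter_filter]
            apply Finset.filter_congr
            intro x _; tauto
          rw [e1, e2, Finset.card_filter_add_card_filter_not]
        by_cases hS' : (S.filter (fun s => ∀ j ∈ J', s j = 0)).card % 2 = 1
        · exact ⟨J', Nat.le_succ_of_le hJ'le, hS'⟩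
        · refine ⟨insert i J', ?_, ?_⟩
          · calc (insert i J').card ≤ J'.card + 1 := Finset.card_insert_le _ _
              _ ≤ k + 1 := Nat.add_le_add_right hJ'le 1
          · set a := (S.filter (fun s => ∀ j ∈ J', s j = 0)).card with ha
            set b := (S.filter (fun s => ∀ j ∈ insert i J', s j = 0)).card with hb
            set d := (B.filter (fun s => ∀ j ∈ J', s j = 0)).card with hd
            clear_value a b d
            clear * - hsplit hS' hJ'odd
            omega

end Stmt10Aux

open Stmt10Aux in
/-- if `S` is nonempty with `|S| ≤ 2^k`, some monomial
`∏_{i ∉ J} x_i` with `|J| ≤ k` has nonzero coefficient in the multilinear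
representation of the indicator of `S`; if `S = ∅` all coefficients vanish. -/
theorem stmt10 (n k : ℕ) (S : Finset (Fin n → ZMod 2)) (c : Finset (Fin n) → ZMod 2)
    (hc : ∀ x : Fin n → ZMod 2,
      (if x ∈ S then (1 : ZMod 2) else 0) = ∑ T : Finset (Fin n), c T * ∏ i ∈ T, x i) :
    (S.Nonempty → S.card ≤ 2 ^ k →
      ∃ J : Finset (Fin n), J.card ≤ k ∧ c Jᶜ ≠ 0) ∧
    (S = ∅ → ∀ T : Finset (Fin n), c T = 0) := by
  constructor
  · intro hne hcard
    obtain ⟨J, hJle, hJodd⟩ := comb k S hne hcard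
    refine ⟨J, hJle, ?_⟩
    rw [coeff_eq S c hc]
    -- the sum of indicators equals the cast of a cardinality
    have hsum : (∑ T ∈ Jᶜ.powerset, (if e T ∈ S then (1 : ZMod 2) else 0))
        = ((Jᶜ.powerset.filter (fun T => e T ∈ S)).card : ZMod 2) := by
      rw [Finset.sum_ite, Finset.sum_const_zero, add_zero, Finset.sum_const, nsmul_eq_mul,
        mul_one]
    rw [hsum]
    -- the two cardinalities agree via the bijection `e`
    have hbij : (Jᶜ.powerset.filter (fun T => e T ∈ S)).card
        = (S.filter (fun s => ∀ i ∈ J, s i = 0)).card := by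
      apply Finset.card_bij (fun T _ => e T)
      · intro T hT
        rw [Finset.mem_filter, Finset.mem_powerset] at hT
        rw [Finset.mem_filter]
        refine ⟨hT.2, fun j hj => ?_⟩
        have : j ∉ T := fun h => (Finset.mem_compl.mp (hT.1 h)) hj
        simp [e, this]
      · intro T₁ _ T₂ _ h
        exact e_inj h
      · intro s hsmem
        rw [Finset.mem_filter] at hsmem
        refine ⟨Finset.univ.filter (fun i => s i = 1), ?_, e_supp s⟩
        rw [Finset.mem_filter, Finset.mem_powerset, e_supp]
        refine ⟨?_, hsmem.1⟩
        intro j hj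
        rw [Finset.mem_filter] at hj
        rw [Finset.mem_compl]
        intro hjJ
        have := hsmem.2 j hjJ
        rw [this] at hj
        exact one_ne_zero hj.2.symm
    rw [hbij]
    intro h0
    rw [ZMod.natCast_eq_zero_iff] at h0
    set m := (S.filter (fun s => ∀ i ∈ J, s i = 0)).card with hm
    clear_value m
    omega
  · intro hS T
    rw [coeff_eq S c hc]
    subst hS
    simp
end

section
/- Let g_1, …, g_n : (ZMod 2)^n → ZMod 2 with g_t depending only on x_1,…,x_t, and let G = ∏_{t=1}^n g_t (pointwise product). Writing C_δ for the multilinear coefficients of G and c^t_ξ for those of g_t, the top coefficient satisfies the recursion C^{[1:n]}_{(1,…,1)} = Σ_{ξ ∈ {0,1}^{n-1}} c^n_{(ξ,1)} · Σ_{ζ : ζ_i ≥ 1 − ξ_i for all i} C^{[1:n-1]}_ζ, where C^{[1:n-1]} are the multilinear coefficients of ∏_{t=1}^{n-1} g_t and sums are in ZMod 2. -/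
open Finset

namespace Stmt17Aux

variable {m : ℕ}

/-- indicator vector of a subset -/
def ind (S : Finset (Fin m)) : Fin m → ZMod 2 := fun i => if i ∈ S then 1 else 0

lemma prod_ind (S T : Finset (Fin m)) :
    (∏ i ∈ T, ind S i) = if T ⊆ S then 1 else 0 := by
  by_cases h : T ⊆ S
  · rw [if_pos h]
    exact Finset.prod_eq_one fun i hi => by simp [ind, h hi]
  · rw [if_neg h]
    obtain ⟨i, hiT, hiS⟩ := Finset.not_subset.mp h
    exact Finset.prod_eq_zero hiT (by simp [ind, hiS])

lemma eval_ind (F : (Fin m → ZMod 2) → ZMod 2) (A : Finset (Fin m) → ZMod 2)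
    (hA : ∀ x, F x = ∑ T : Finset (Fin m), A T * ∏ i ∈ T, x i) (S : Finset (Fin m)) :
    F (ind S) = ∑ T ∈ S.powerset, A T := by
  rw [hA]
  have h1 : ∀ T : Finset (Fin m), A T * ∏ i ∈ T, ind S i = if T ⊆ S then A T else 0 := by
    intro T; rw [prod_ind]; split <;> simp
  rw [Finset.sum_congr rfl fun T _ => h1 T, ← Finset.sum_filter]
  congr 1
  ext T; simp

lemma card_between (U T : Finset (Fin m)) :
    ((T.powerset.filter fun S => U ⊆ S).card : ZMod 2) = if U = T then 1 else 0 := by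
  have h1 : T.powerset.filter (fun S => U ⊆ S) = Finset.Icc U T := by
    ext S
    simp only [Finset.mem_filter, Finset.mem_powerset, Finset.mem_Icc]
    exact ⟨fun ⟨a, b⟩ => ⟨b, a⟩, fun ⟨a, b⟩ => ⟨b, a⟩⟩
  rw [h1]
  by_cases h : U ⊆ T
  · rw [Finset.card_Icc_finset h]
    by_cases he : U = T
    · subst he; simp
    · rw [if_neg he]
      have hlt : U.card < T.card := Finset.card_lt_card (lt_of_le_of_ne h he)
      have hk : T.card - U.card ≠ 0 := by omega
      rw [Nat.cast_pow, show ((2:ℕ):ZMod 2) = 0 from rfl, zero_pow hk]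
  · rw [Finset.Icc_eq_empty h, if_neg (by rintro rfl; exact h subset_rfl)]
    simp

lemma coeff_eq (F : (Fin m → ZMod 2) → ZMod 2) (A : Finset (Fin m) → ZMod 2)
    (hA : ∀ x, F x = ∑ T : Finset (Fin m), A T * ∏ i ∈ T, x i) (T : Finset (Fin m)) :
    A T = ∑ S ∈ T.powerset, F (ind S) := by
  symm
  have h1 : ∀ S : Finset (Fin m),
      F (ind S) = ∑ U : Finset (Fin m), if U ⊆ S then A U else 0 := by
    intro S
    rw [eval_ind F A hA, ← Finset.sum_filter]
    congr 1
    ext U; simp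
  calc ∑ S ∈ T.powerset, F (ind S)
      = ∑ S ∈ T.powerset, ∑ U : Finset (Fin m), if U ⊆ S then A U else 0 :=
        Finset.sum_congr rfl fun S _ => h1 S
    _ = ∑ U : Finset (Fin m), ∑ S ∈ T.powerset, if U ⊆ S then A U else 0 :=
        Finset.sum_comm
    _ = ∑ U : Finset (Fin m), if U = T then A U else 0 := by
        refine Finset.sum_congr rfl fun U _ => ?_
        rw [Finset.sum_ite, Finset.sum_const, Finset.sum_const_zero, add_zero,
          nsmul_eq_mul, card_between]
        split <;> simp
    _ = A T := by simp

lemma sum_powerset_eq (S : Finset (Fin m)) (f : Finset (Fin m) → ZMod 2) :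
    ∑ U ∈ S.powerset, f U = ∑ U : Finset (Fin m), if U ⊆ S then f U else 0 := by
  rw [← Finset.sum_filter]
  congr 1
  ext U; simp

lemma sum_ite_superset (W : Finset (Fin m)) (c : ZMod 2) :
    (∑ S : Finset (Fin m), if W ⊆ S then c else 0) =
      if W = Finset.univ then c else 0 := by
  rw [Finset.sum_ite, Finset.sum_const, Finset.sum_const_zero, add_zero, nsmul_eq_mul]
  have h1 : (Finset.univ.filter fun S : Finset (Fin m) => W ⊆ S) =
      (Finset.univ : Finset (Fin m)).powerset.filter (fun S => W ⊆ S) := by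
    rw [Finset.powerset_univ]
  rw [h1, card_between]
  split <;> simp

end Stmt17Aux
/-- recursion for the top multilinear coefficient of a product
`G = ∏ t, g t` of triangular functions (`g t` depends only on coordinates
`≤ t`): the top coefficient of `G` is obtained from the coefficients `cn` of
the last factor (on monomials containing the last variable) and the
coefficients `C'` of the product of the remaining factors, summing over
complementary pairs of monomials. -/
theorem stmt17 (n : ℕ) (g : Fin (n + 1) → (Fin (n + 1) → ZMod 2) → ZMod 2)
    (htri : ∀ (t : Fin (n + 1)) (x y : Fin (n + 1) → ZMod 2),
      (∀ j : Fin (n + 1), j ≤ t → x j = y j) → g t x = g t y)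
    (C C' cn : Finset (Fin (n + 1)) → ZMod 2)
    (hC : ∀ x : Fin (n + 1) → ZMod 2,
      (∏ t : Fin (n + 1), g t x) = ∑ T : Finset (Fin (n + 1)), C T * ∏ i ∈ T, x i)
    (hC' : ∀ x : Fin (n + 1) → ZMod 2,
      (∏ t ∈ Finset.univ.erase (Fin.last n), g t x) =
        ∑ T : Finset (Fin (n + 1)), C' T * ∏ i ∈ T, x i)
    (hcn : ∀ x : Fin (n + 1) → ZMod 2,
      g (Fin.last n) x = ∑ T : Finset (Fin (n + 1)), cn T * ∏ i ∈ T, x i) :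
    C Finset.univ =
      ∑ T ∈ Finset.univ.filter (fun T : Finset (Fin (n + 1)) => Fin.last n ∉ T),
        cn (insert (Fin.last n) T) *
          ∑ Z ∈ Finset.univ.filter (fun Z : Finset (Fin (n + 1)) =>
              Fin.last n ∉ Z ∧ ∀ i : Fin (n + 1), i ≠ Fin.last n → i ∉ T → i ∈ Z),
            C' Z := by
  classical
  set lastn := Fin.last n with hlastn
  -- the product of the first n factors does not see the last coordinate
  have hFind : ∀ S : Finset (Fin (n + 1)),
      (∏ t ∈ Finset.univ.erase lastn, g t (Stmt17Aux.ind (insert lastn S))) =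
      ∏ t ∈ Finset.univ.erase lastn, g t (Stmt17Aux.ind S) := by
    intro S
    refine Finset.prod_congr rfl fun t ht => ?_
    have htne : t ≠ lastn := (Finset.mem_erase.mp ht).1
    refine htri t _ _ fun j hj => ?_
    have hjne : j ≠ lastn := by
      rintro rfl
      exact htne (le_antisymm (Fin.le_last t) hj)
    simp [Stmt17Aux.ind, Finset.mem_insert, hjne]
  -- vanishing of C' on sets containing the last coordinate
  have hvanish : ∀ V : Finset (Fin (n + 1)), lastn ∈ V → C' V = 0 := by
    intro V hV
    have h0 := Stmt17Aux.coeff_eq _ C' hC' V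
    rw [← Finset.insert_erase hV,
      Finset.sum_powerset_insert (Finset.notMem_erase _ _)] at h0
    rw [Finset.insert_erase hV] at h0
    rw [h0, Finset.sum_congr rfl fun S _ => hFind S, ← two_mul,
      show (2 : ZMod 2) = 0 from rfl, zero_mul]
  -- key formula: convolution over unions
  have hkey : C Finset.univ =
      ∑ U : Finset (Fin (n + 1)), ∑ V : Finset (Fin (n + 1)),
        if U ∪ V = Finset.univ then cn U * C' V else 0 := by
    have h0 := Stmt17Aux.coeff_eq _ C hC Finset.univ
    rw [Finset.powerset_univ] at h0
    have h1 : ∀ S : Finset (Fin (n + 1)),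
        (∏ t, g t (Stmt17Aux.ind S)) =
        ∑ U : Finset (Fin (n + 1)), ∑ V : Finset (Fin (n + 1)),
          if U ⊆ S ∧ V ⊆ S then cn U * C' V else 0 := by
      intro S
      rw [← Finset.mul_prod_erase Finset.univ (fun t => g t (Stmt17Aux.ind S))
          (Finset.mem_univ lastn),
        Stmt17Aux.eval_ind (g lastn) cn (hcn) S,
        Stmt17Aux.eval_ind _ C' hC' S, Finset.sum_mul_sum]
      calc ∑ U ∈ S.powerset, ∑ V ∈ S.powerset, cn U * C' V
          = ∑ U ∈ S.powerset, ∑ V : Finset (Fin (n + 1)),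
              if V ⊆ S then cn U * C' V else 0 :=
            Finset.sum_congr rfl fun U _ => Stmt17Aux.sum_powerset_eq S _
        _ = ∑ U : Finset (Fin (n + 1)), if U ⊆ S then
              (∑ V : Finset (Fin (n + 1)), if V ⊆ S then cn U * C' V else 0) else 0 :=
            Stmt17Aux.sum_powerset_eq S _
        _ = ∑ U : Finset (Fin (n + 1)), ∑ V : Finset (Fin (n + 1)),
              if U ⊆ S ∧ V ⊆ S then cn U * C' V else 0 := by
            refine Finset.sum_congr rfl fun U _ => ?_
            by_cases h : U ⊆ S <;> simp [h]
    rw [h0, Finset.sum_congr rfl fun S _ => h1 S, Finset.sum_comm]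
    refine Finset.sum_congr rfl fun U _ => ?_
    rw [Finset.sum_comm]
    refine Finset.sum_congr rfl fun V _ => ?_
    simp only [← Finset.union_subset_iff]
    exact Stmt17Aux.sum_ite_superset _ _
  -- restrict the convolution to pairs with lastn ∈ U, lastn ∉ V
  have h2 : ∀ U V : Finset (Fin (n + 1)),
      (if U ∪ V = Finset.univ then cn U * C' V else 0) =
      (if lastn ∈ U ∧ lastn ∉ V ∧ U ∪ V = Finset.univ then cn U * C' V else 0) := by
    intro U V
    by_cases hV : lastn ∈ V
    · rw [hvanish V hV]
      simp [hV]
    · by_cases hU : U ∪ V = Finset.univ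
      · have hUl : lastn ∈ U := by
          have hm : lastn ∈ U ∪ V := hU ▸ Finset.mem_univ lastn
          rcases Finset.mem_union.mp hm with h | h
          · exact h
          · exact absurd h hV
        rw [if_pos hU, if_pos ⟨hUl, hV, hU⟩]
      · rw [if_neg hU, if_neg (by rintro ⟨-, -, h⟩; exact hU h)]
  rw [hkey]
  simp only [h2]
  -- turn the double sum into a filtered sum over U containing lastn
  have h3 : (∑ U : Finset (Fin (n + 1)), ∑ V : Finset (Fin (n + 1)),
      if lastn ∈ U ∧ lastn ∉ V ∧ U ∪ V = Finset.univ then cn U * C' V else 0) =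
      ∑ U ∈ Finset.univ.filter (fun U : Finset (Fin (n + 1)) => lastn ∈ U),
        ∑ V : Finset (Fin (n + 1)),
          if lastn ∉ V ∧ U ∪ V = Finset.univ then cn U * C' V else 0 := by
    rw [Finset.sum_filter]
    refine Finset.sum_congr rfl fun U _ => ?_
    by_cases h : lastn ∈ U <;> simp [h]
  rw [h3]
  -- reindex U ↦ U.erase lastn
  refine Finset.sum_bij' (fun U _ => U.erase lastn) (fun T _ => insert lastn T)
    ?_ ?_ ?_ ?_ ?_
  · intro U hU
    simp [Finset.notMem_erase]
  · intro T hT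
    simp
  · intro U hU
    exact Finset.insert_erase (by simpa using hU)
  · intro T hT
    exact Finset.erase_insert (by simpa using hT)
  · intro U hU
    have hUl : lastn ∈ U := by simpa using hU
    rw [Finset.mul_sum, Finset.sum_filter]
    refine Finset.sum_congr rfl fun V _ => ?_
    have hcond : (lastn ∉ V ∧ U ∪ V = Finset.univ) ↔
        (lastn ∉ V ∧ ∀ i : Fin (n + 1), i ≠ lastn → i ∉ U.erase lastn → i ∈ V) := by
      constructor
      · rintro ⟨hV, hU2⟩
        refine ⟨hV, fun i hi hiU => ?_⟩
        have : i ∈ U ∪ V := hU2 ▸ Finset.mem_univ i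
        rcases Finset.mem_union.mp this with h | h
        · exact absurd (Finset.mem_erase.mpr ⟨hi, h⟩) hiU
        · exact h
      · rintro ⟨hV, hall⟩
        refine ⟨hV, Finset.eq_univ_iff_forall.mpr fun i => ?_⟩
        by_cases hi : i = lastn
        · exact Finset.mem_union_left _ (hi ▸ hUl)
        · by_cases hiU : i ∈ U
          · exact Finset.mem_union_left _ hiU
          · exact Finset.mem_union_right _
              (hall i hi (fun h => hiU (Finset.mem_erase.mp h).2))
    rw [Finset.insert_erase hUl]
    by_cases h : lastn ∉ V ∧ U ∪ V = Finset.univ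
    · rw [if_pos h, if_pos (hcond.mp h)]
    · rw [if_neg h, if_neg (fun hh => h (hcond.mpr hh))]
end
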